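/- arXiv:1103.0902 — 3 statements merged into one kernel-verified Lean document; each statement's English description precedes it below -/
import Mathlib

section
/- Let K be a field, A ⊆ K a Dedekind domain, and V' a finite-dimensional K-vector space. Suppose R and S are A-lattices of V' with span_K(R) = span_K(S) = V', and write R = m_R·b_{R,0} ⊕ ⊕_{i=1}^{n} A·b_{R,i} and S = m_S·b_{S,0} ⊕ ⊕_{i=1}^{n} A·b_{S,i} where m_R, m_S are fractional ideals of A and (b_{R,i}), (b_{S,i}) are K-bases of V'. Then [R:S]'_A = m_S · m_R^{-1} · det_{B_S,B_R}(Id_{V'}), where det_{B_S,B_R}(Id) is the determinant of the change-of-basis matrix from B_S to B_R. -/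
open Submodule

variable (A K V : Type*) [CommRing A] [Field K] [Algebra A K]
  [AddCommGroup V] [Module K V] [Module A V] [IsScalarTower A K V]

/-- `R` is an `A`-lattice of the `K`-vector space `V`: finitely generated, and its
`A`-rank equals the `K`-dimension of its `K`-span. -/
def IsLattice (R : Submodule A V) : Prop :=
  R.FG ∧ Module.rank A R = Module.rank K (span K (R : Set V))

/-- The index-module `[R:S]'_A`, as a subset of `K`: the set of determinants of
`K`-endomorphisms `u` of `V' = span_K(R ∪ S)` such that `u(R) ⊆ S`. -/
def indexSet (R S : Submodule A V) : Set K :=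
  { d : K | ∃ u : (span K ((R : Set V) ∪ (S : Set V))) →ₗ[K]
      (span K ((R : Set V) ∪ (S : Set V))),
      LinearMap.det u = d ∧
      ∀ x : (span K ((R : Set V) ∪ (S : Set V))), (x : V) ∈ R → (u x : V) ∈ S }

/-! Writing `u` in the bases `B_R` and `B_S` gives `det u = det_{B_S,B_R}(Id) · det C`, and
`u(R) ⊆ S` says exactly that `C i j ∈ m'ᵢ / mⱼ`, where `(m_R, A, …, A)` and `(m_S, A, …, A)` are
the coefficient modules of the two pseudo-bases. Expanding the determinant puts `det C` in
`m_S / m_R`, and the diagonal matrices `diag(y, 1, …, 1)` realise every element of it.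

The quotient `m_S / m_R` is `m_S · m_R⁻¹` because `m_R` is invertible: the rank condition in
`IsLattice` forces `m_R` to have `A`-rank one, so `m_R` is a scalar multiple of a finitely
generated `A`-submodule of `Frac A`, i.e. of a fractional ideal, and `A` is Dedekind. -/

namespace Submodule

variable {R B C : Type*} [CommSemiring R] [CommSemiring B] [Algebra R B]
  [CommSemiring C] [Algebra R C]

theorem one_mem_one : (1 : B) ∈ (1 : Submodule R B) :=
  one_le.mp le_rfl

theorem prod_mem_prod {ι : Type*} (s : Finset ι) {M : ι → Submodule R B} {x : ι → B}
    (hx : ∀ i ∈ s, x i ∈ M i) : ∏ i ∈ s, x i ∈ ∏ i ∈ s, M i := by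
  classical
  induction s using Finset.induction with
  | empty => simpa using one_mem_one
  | insert a s ha ih =>
    rw [Finset.prod_insert ha, Finset.prod_insert ha]
    exact mul_mem_mul (hx a (Finset.mem_insert_self a s))
      (ih fun i hi => hx i (Finset.mem_insert_of_mem hi))

theorem one_div_one : (1 : Submodule R B) / 1 = 1 :=
  le_antisymm (fun x hx => by simpa using hx 1 one_mem_one) (one_le_one_div.mpr le_rfl)

theorem mul_one_div_eq_one_of_mul_eq_one {M N : Submodule R B} (h : M * N = 1) :
    M * (1 / M) = 1 := by
  refine le_antisymm mul_one_div_le_one ?_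
  calc 1 = M * N := h.symm
    _ ≤ M * (1 / M) := mul_le_mul_right (le_div_iff_mul_le.mpr (by rw [mul_comm, h])) M

theorem mul_one_div_eq_div {M : Submodule R B} (hM : M * (1 / M) = 1) (N : Submodule R B) :
    N * (1 / M) = N / M := by
  refine le_antisymm (le_div_iff_mul_le.mpr ?_) ?_
  · rw [mul_assoc, mul_comm (1 / M), hM, mul_one]
  · calc N / M = N / M * (M * (1 / M)) := by rw [hM, mul_one]
      _ = N / M * M * (1 / M) := (mul_assoc _ _ _).symm
      _ ≤ N * (1 / M) := mul_le_mul_left (le_div_iff_mul_le.mp le_rfl) _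

theorem map_mul_one_div_map_eq_one (φ : B →ₐ[R] C) {J : Submodule R B} (hJ : J * (1 / J) = 1) :
    J.map φ.toLinearMap * (1 / J.map φ.toLinearMap) = 1 :=
  mul_one_div_eq_one_of_mul_eq_one (N := (1 / J).map φ.toLinearMap) <| by
    rw [← Submodule.map_mul, hJ, Submodule.map_one]

theorem mul_one_div_eq_one_of_fg {A F : Type*} [CommRing A] [IsDedekindDomain A] [Field F]
    [Algebra A F] [IsFractionRing A F] {J : Submodule A F} (hJ : J ≠ ⊥) (hfg : J.FG) :
    J * (1 / J) = 1 := by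
  let I : FractionalIdeal (nonZeroDivisors A) F := ⟨J, FractionalIdeal.isFractional_of_fg hfg⟩
  have hI : I ≠ 0 := fun h => hJ (FractionalIdeal.coeToSubmodule_eq_bot.mpr h)
  have := congrArg ((↑) : FractionalIdeal (nonZeroDivisors A) F → Submodule A F)
    (mul_inv_cancel₀ hI)
  rwa [FractionalIdeal.coe_mul, FractionalIdeal.coe_inv_of_ne_zero (K := F) hI,
    IsLocalization.coeSubmodule_top, FractionalIdeal.coe_one] at this

end Submodule

theorem Matrix.det_mem_prod_mul_prod {ι R B : Type*} [Fintype ι] [DecidableEq ι] [CommRing R]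
    [CommRing B] [Algebra R B] (C : Matrix ι ι B) {P Q : ι → Submodule R B}
    (hC : ∀ i j, C i j ∈ P i * Q j) : C.det ∈ (∏ i, P i) * ∏ j, Q j := by
  rw [Matrix.det_apply]
  refine sum_mem fun σ _ => ?_
  rw [Units.smul_def]
  refine zsmul_mem ?_ _
  have := prod_mem_prod Finset.univ fun j _ => hC (σ j) j
  rwa [Finset.prod_mul_distrib, Equiv.prod_comp σ P] at this

theorem LinearMap.det_eq_det_basis_toMatrix_mul {ι R M : Type*} [Fintype ι] [DecidableEq ι]
    [CommRing R] [AddCommGroup M] [Module R M] (b b' : Module.Basis ι R M) (u : M →ₗ[R] M) :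
    LinearMap.det u = (b.toMatrix b').det * (LinearMap.toMatrix b b' u).det := by
  rw [← LinearMap.det_toMatrix b, ← Matrix.det_mul, ← LinearMap.toMatrix_id_eq_basis_toMatrix,
    ← LinearMap.toMatrix_comp, LinearMap.id_comp]

section RankOne

variable {A K}

theorem exists_liftAlgHom_eq_inv_mul_of_not_linearIndependent [IsDomain A]
    (hAK : Function.Injective (algebraMap A K)) {x g : K} (hg : g ≠ 0)
    (hxg : ¬LinearIndependent A ![x, g]) :
    ∃ q : FractionRing A,
      IsFractionRing.liftAlgHom (g := Algebra.ofId A K) hAK q = g⁻¹ * x := by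
  obtain ⟨s, t, hst, hne⟩ : ∃ s t : A, s • x + t • g = 0 ∧ ¬(s = 0 ∧ t = 0) := by
    simpa [LinearIndependent.pair_iff] using hxg
  simp only [Algebra.smul_def] at hst
  have hs : s ≠ 0 := by
    rintro rfl
    refine hne ⟨rfl, (map_eq_zero_iff _ hAK).mp ?_⟩
    simpa [hg] using hst
  have hsK : algebraMap A K s ≠ 0 := (map_ne_zero_iff _ hAK).mpr hs
  refine ⟨algebraMap A (FractionRing A) (-t) / algebraMap A (FractionRing A) s, ?_⟩
  rw [map_div₀, AlgHom.commutes, AlgHom.commutes, map_neg]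
  field_simp
  linear_combination -hst

theorem mul_one_div_eq_one_of_not_linearIndependent [IsDedekindDomain A]
    (hAK : Function.Injective (algebraMap A K)) {M : Submodule A K} (hM : M ≠ ⊥) (hfg : M.FG)
    (hdep : ∀ x ∈ M, ∀ y ∈ M, ¬LinearIndependent A ![x, y]) :
    M * (1 / M) = 1 := by
  obtain ⟨g, hgM, hg⟩ := exists_mem_ne_zero_of_ne_bot hM
  let φ :=
    (IsFractionRing.liftAlgHom (K := FractionRing A) (g := Algebra.ofId A K) hAK).toLinearMap
  set N := span A {g⁻¹} * M with hN
  have hunit : span A {g} * span A {g⁻¹} = 1 := by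
    rw [span_mul_span, Set.singleton_mul_singleton, mul_inv_cancel₀ hg, ← one_eq_span]
  have hMN : M = span A {g} * N := by rw [hN, ← mul_assoc, hunit, one_mul]
  -- `N = g⁻¹ M` lies in the copy of `Frac A` inside `K`, where it is a fractional ideal.
  have hNφ : N ≤ LinearMap.range φ := by
    intro z hz
    obtain ⟨x, hx, rfl⟩ := mem_span_singleton_mul.mp hz
    exact exists_liftAlgHom_eq_inv_mul_of_not_linearIndependent hAK hg (hdep x hx g hgM)
  have hNJ : (N.comap φ).map φ = N := map_comap_eq_of_le hNφ
  have hJ : N.comap φ * (1 / N.comap φ) = 1 := by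
    have hNfg : N.FG := (fg_span_singleton _).mul hfg
    refine mul_one_div_eq_one_of_fg (fun hbot => ?_)
      (fg_of_fg_map_injective φ (RingHom.injective _) (by rwa [hNJ]))
    have hg1 : g⁻¹ * g ∈ N := mem_span_singleton_mul.mpr ⟨g, hgM, rfl⟩
    rw [← hNJ, hbot, Submodule.map_bot, mem_bot, inv_mul_cancel₀ hg] at hg1
    exact one_ne_zero hg1
  have hNinv : N * (1 / N) = 1 := hNJ ▸ map_mul_one_div_map_eq_one _ hJ
  rw [hMN]
  exact mul_one_div_eq_one_of_mul_eq_one (N := span A {g⁻¹} * (1 / N)) <| by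
    rw [mul_mul_mul_comm, hunit, hNinv, one_mul]

end RankOne

namespace Module.Basis

variable {A K V} {ι : Type*}

noncomputable def pseudoSpan (b : Basis ι K V) (m : ι → Submodule A K) : Submodule A V :=
  ⨆ i, (m i).map ((LinearMap.toSpanSingleton K V (b i)).restrictScalars A)

theorem smul_mem_pseudoSpan (b : Basis ι K V) (m : ι → Submodule A K) {i : ι} {c : K}
    (hc : c ∈ m i) : c • b i ∈ b.pseudoSpan m :=
  le_iSup (fun i => (m i).map ((LinearMap.toSpanSingleton K V (b i)).restrictScalars A)) i
    ⟨c, hc, rfl⟩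

theorem mem_pseudoSpan_iff (b : Basis ι K V) (m : ι → Submodule A K) {v : V} :
    v ∈ b.pseudoSpan m ↔ ∀ i, b.repr v i ∈ m i := by
  constructor
  · intro hv
    suffices b.pseudoSpan m ≤ ⨅ i, (m i).comap ((b.coord i).restrictScalars A) by
      simpa using this hv
    refine iSup_le fun i => ?_
    rintro _ ⟨c, hc, rfl⟩
    simp only [mem_iInf, mem_comap]
    intro j
    by_cases h : i = j
    · subst h; simpa using hc
    · simp [h]
  · intro hv
    rw [← b.linearCombination_repr v, Finsupp.linearCombination_apply]
    exact Submodule.finsuppSum_mem _ _ _ _ fun i _ => b.smul_mem_pseudoSpan m (hv i)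

theorem linearIndependent_sumElim_smul (hAK : Function.Injective (algebraMap A K)) {n : ℕ}
    (b : Basis (Fin (n + 1)) K V) {κ : Type*} [Fintype κ] {f : κ → K}
    (hf : LinearIndependent A f) :
    LinearIndependent A (Sum.elim (fun k => f k • b 0) (fun i : Fin n => b i.succ)) := by
  rw [Fintype.linearIndependent_iff]
  intro c hc
  have hc' : (∑ k, algebraMap A K (c (.inl k)) * f k) • b 0 +
      ∑ i : Fin n, algebraMap A K (c (.inr i)) • b i.succ = 0 := by
    rw [← hc, Fintype.sum_sum_type, Finset.sum_smul]
    simp [mul_smul, algebraMap_smul]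
  have hcoord j := congrArg (fun v => b.repr v j) hc'
  simp only [map_add, map_smul, map_sum, b.repr_self, Finsupp.add_apply, Finsupp.smul_apply,
    Finsupp.coe_finsetSum, Finset.sum_apply, Finsupp.single_apply, smul_eq_mul] at hcoord
  have h0 := hcoord 0
  have hsucc (i : Fin n) := hcoord i.succ
  simp [Fin.succ_ne_zero, (Fin.succ_ne_zero _).symm] at h0 hsucc
  rintro (k | i)
  · exact Fintype.linearIndependent_iff.mp hf (c ∘ .inl) (by simpa [Algebra.smul_def] using h0) k
  · exact (map_eq_zero_iff _ hAK).mp (hsucc i)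

theorem not_linearIndependent_of_rank_pseudoSpan_le (hAK : Function.Injective (algebraMap A K))
    {n : ℕ} (b : Basis (Fin (n + 1)) K V) {M : Submodule A K}
    (hrank : Module.rank A (b.pseudoSpan fun i => if i = 0 then M else 1) ≤ Module.rank K V)
    {x y : K} (hx : x ∈ M) (hy : y ∈ M) : ¬LinearIndependent A ![x, y] := by
  intro hxy
  have := (algebraMap A K).domain_nontrivial
  set w := Sum.elim (fun k => ![x, y] k • b 0) (fun i : Fin n => b i.succ)
  have hw : ∀ s, w s ∈ b.pseudoSpan fun i => if i = 0 then M else 1 := by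
    rintro (k | i)
    · exact b.smul_mem_pseudoSpan _ (by fin_cases k <;> simpa)
    · simpa [w] using b.smul_mem_pseudoSpan (fun i => if i = 0 then M else 1) (i := i.succ)
        (c := 1) (by simpa [Fin.succ_ne_zero] using one_mem_one)
  have hli : LinearIndependent A fun s => (⟨w s, hw s⟩ : b.pseudoSpan _) :=
    .of_comp (Submodule.subtype _) (linearIndependent_sumElim_smul hAK b hxy)
  have := hli.cardinal_lift_le_rank.trans
    (Cardinal.lift_le.mpr (hrank.trans_eq (rank_eq_card_basis b)))
  simp only [Cardinal.mk_fintype, Fintype.card_sum, Fintype.card_fin,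
    Cardinal.lift_natCast] at this
  exact absurd (by exact_mod_cast this : 2 + n ≤ n + 1) (by omega)

theorem mapsTo_pseudoSpan_iff {ι ι' W : Type*} [Fintype ι] [Fintype ι'] [DecidableEq ι]
    [AddCommGroup W] [Module K W] [Module A W] [IsScalarTower A K W]
    (b : Basis ι K V) (b' : Basis ι' K W) (m : ι → Submodule A K) (m' : ι' → Submodule A K)
    (u : V →ₗ[K] W) :
    (∀ v ∈ b.pseudoSpan m, u v ∈ b'.pseudoSpan m') ↔
      ∀ i j, LinearMap.toMatrix b b' u i j ∈ m' i / m j := by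
  constructor
  · intro hu i j c hc
    have := (b'.mem_pseudoSpan_iff m').mp (hu _ (b.smul_mem_pseudoSpan m hc)) i
    rwa [map_smul, map_smul, Finsupp.smul_apply, smul_eq_mul, mul_comm,
      ← LinearMap.toMatrix_apply] at this
  · intro hu v hv
    rw [b'.mem_pseudoSpan_iff]
    intro i
    rw [← LinearMap.toMatrix_mulVec_repr b b' u v]
    exact sum_mem fun j _ => hu i j _ ((b.mem_pseudoSpan_iff m).mp hv j)

theorem setOf_det_mapsTo_pseudoSpan {n : ℕ} (bR bS : Basis (Fin (n + 1)) K V)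
    {M N : Submodule A K} (hM : M * (1 / M) = 1) :
    {t | ∃ u : V →ₗ[K] V, LinearMap.det u = t ∧
      ∀ v ∈ bR.pseudoSpan (fun i => if i = 0 then M else 1),
        u v ∈ bS.pseudoSpan (fun i => if i = 0 then N else 1)} =
      ↑(N * (1 / M) * span A {(bR.toMatrix bS).det}) := by
  have hinv (j : Fin (n + 1)) :
      (if j = 0 then M else 1) * (1 / if j = 0 then M else 1) = 1 := by
    split_ifs
    · exact hM
    · rw [Submodule.one_div_one, mul_one]
  ext t
  simp only [Set.mem_ofPred_eq, SetLike.mem_coe, mapsTo_pseudoSpan_iff]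
  constructor
  · rintro ⟨u, rfl, hu⟩
    have hdet := Matrix.det_mem_prod_mul_prod _
      (P := fun i : Fin (n + 1) => if i = 0 then N else 1)
      (Q := fun j => 1 / if j = 0 then M else 1)
      fun i j => by rw [Submodule.mul_one_div_eq_div (hinv j)]; exact hu i j
    rw [LinearMap.det_eq_det_basis_toMatrix_mul bR bS, mul_comm (bR.toMatrix bS).det]
    refine mul_mem_mul ?_ (mem_span_singleton_self _)
    simpa [Fin.prod_univ_succ, Submodule.one_div_one] using hdet
  · intro ht
    obtain ⟨y, hy, rfl⟩ := mem_mul_span_singleton.mp ht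
    refine ⟨Matrix.toLin bR bS (Matrix.diagonal fun i => if i = 0 then y else 1), ?_, ?_⟩
    · rw [LinearMap.det_eq_det_basis_toMatrix_mul bR bS, LinearMap.toMatrix_toLin,
        Matrix.det_diagonal, mul_comm (bR.toMatrix bS).det]
      simp
    · intro i j
      rw [LinearMap.toMatrix_toLin, Matrix.diagonal_apply]
      obtain rfl | hij := eq_or_ne i j
      · obtain rfl | hi := eq_or_ne i 0
        · simp only [if_true, ← Submodule.mul_one_div_eq_div hM N, hy]
        · simp only [if_true, if_neg hi, Submodule.one_div_one]
          exact one_mem_one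
      · rw [if_neg hij]
        exact zero_mem _

end Module.Basis

theorem indexSet_eq_of_span_union_eq_top {A K V : Type*} [CommRing A] [Field K]
    [AddCommGroup V] [Module K V] [Module A V] {R S : Submodule A V}
    (h : span K ((R : Set V) ∪ S) = ⊤) :
    indexSet A K V R S =
      {t | ∃ u : V →ₗ[K] V, LinearMap.det u = t ∧ ∀ v ∈ R, u v ∈ S} := by
  let e := LinearEquiv.ofTop _ h
  ext t
  constructor
  · rintro ⟨u, rfl, hu⟩
    exact ⟨e.conj u, LinearMap.det_conj u e, fun v hv => hu (e.symm v) hv⟩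
  · rintro ⟨u, rfl, hu⟩
    exact ⟨e.symm.conj u, LinearMap.det_conj u e.symm, fun x hx => hu x hx⟩

theorem stmt_2 [IsDedekindDomain A] (hAK : Function.Injective (algebraMap A K))
    (n : ℕ) (bR bS : Module.Basis (Fin (n + 1)) K V)
    (mR mS : Submodule A K) (hmR : mR ≠ ⊥) (hmRfg : mR.FG)
    (R S : Submodule A V) (hR : IsLattice A K V R)
    (hRspan : span K (R : Set V) = ⊤)
    (hRdef : R = ⨆ i : Fin (n + 1),
      ((if i = 0 then mR else 1).map ((LinearMap.toSpanSingleton K V (bR i)).restrictScalars A)))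
    (hSdef : S = ⨆ i : Fin (n + 1),
      ((if i = 0 then mS else 1).map ((LinearMap.toSpanSingleton K V (bS i)).restrictScalars A))) :
    indexSet A K V R S = ↑(mS * (1 / mR) * span A {(bR.toMatrix ⇑bS).det}) := by
  replace hRdef : R = bR.pseudoSpan fun i => if i = 0 then mR else 1 := hRdef
  replace hSdef : S = bS.pseudoSpan fun i => if i = 0 then mS else 1 := hSdef
  have hrank :
      Module.rank A (bR.pseudoSpan fun i => if i = 0 then mR else 1) ≤ Module.rank K V := by
    rw [← hRdef, hR.2, hRspan, rank_top]
  have hinv : mR * (1 / mR) = 1 :=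
    mul_one_div_eq_one_of_not_linearIndependent hAK hmR hmRfg fun x hx y hy =>
      bR.not_linearIndependent_of_rank_pseudoSpan_le hAK hrank hx hy
  rw [indexSet_eq_of_span_union_eq_top (eq_top_mono (span_mono Set.subset_union_left) hRspan),
    hRdef, hSdef]
  exact bR.setOf_det_mapsTo_pseudoSpan bS hinv
end

section
/- Let K be a field, A ⊆ K a Dedekind domain, V a K-vector space, and R, S A-lattices with R ≠ 0 and span_K(R) = span_K(S) = V'. If v is a K-linear automorphism of V' with v(R) = S, then [R:S]'_A = A·det(v). -/
/-!
Write `M` and `N` for `R` and `S` seen inside `V'`. If `u(M) ⊆ N`, then `w = v⁻¹ ∘ u` preserves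
`M`. Choosing a basis `e` of `V'` inside `M` and `d ≠ 0` with `d • M ⊆ ⊕ A eᵢ`, the matrices of
the powers of `w` have entries in `d⁻¹A`, so `dⁿ det(w)ᵏ ∈ A` for all `k`: `det w` is integral over
`A` and lies in the fraction field of `A`, hence in `A`.
Conversely, for a coordinate form `λ`, the ideal `d λ(M)` of `A` divides `(d)`, which produces
`m₀` with `λ m₀ = 1` and `λ(M) m₀ ⊆ M`. The transvection `x ↦ x + (a - 1) λ(x) m₀` then preserves
`M` and has determinant `a`, and composing it with `v` realises `a det v`.
-/

open Submodule

variable (A K V : Type*) [CommRing A] [Field K] [Algebra A K]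
  [AddCommGroup V] [Module K V] [Module A V] [IsScalarTower A K V]

theorem Matrix.det_mem_range_of_forall_mem_range {n R S : Type*} [Fintype n] [DecidableEq n]
    [CommRing R] [CommRing S] (f : R →+* S) {B : Matrix n n S} (hB : ∀ i j, B i j ∈ f.range) :
    B.det ∈ f.range := by
  choose C hC using hB
  exact ⟨(Matrix.of C).det, by rw [RingHom.map_det]; congr; ext i j; exact hC i j⟩

section

variable {A K} {W : Type*} [AddCommGroup W] [Module K W] [Module A W] [IsScalarTower A K W]
  {M : Submodule A W}

theorem Module.Basis.mul_det_mem_range_of_mapsTo [IsDomain A] [Module.IsTorsionFree A K]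
    {ι : Type*} [Fintype ι] [DecidableEq ι] (e : Module.Basis ι K W) (heM : ∀ i, e i ∈ M) {d : A}
    (hdM : ∀ x ∈ M, d • x ∈ span A (Set.range e)) {u : W →ₗ[K] W} (hu : Set.MapsTo u M M) :
    algebraMap A K d ^ Fintype.card ι * LinearMap.det u ∈ (algebraMap A K).range := by
  rw [← Module.finrank_eq_card_basis e, ← LinearMap.det_smul, ← LinearMap.det_toMatrix e]
  refine Matrix.det_mem_range_of_forall_mem_range _ fun i j => ?_
  rw [LinearMap.toMatrix_apply, LinearMap.smul_apply, algebraMap_smul]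
  exact (e.mem_span_iff_repr_mem A _).mp (hdM _ (hu (heM j))) i

theorem isIntegral_of_forall_mul_pow_mem_range [IsNoetherianRing A] {c t : K} (hc : c ≠ 0)
    (h : ∀ k : ℕ, c * t ^ k ∈ (algebraMap A K).range) : IsIntegral A t := by
  have hle : Subalgebra.toSubmodule (Algebra.adjoin A {t}) ≤ span A {c⁻¹} := by
    intro z hz
    rw [Subalgebra.mem_toSubmodule, Algebra.adjoin_singleton_eq_range_aeval] at hz
    obtain ⟨p, rfl⟩ := hz
    change Polynomial.aeval t p ∈ _
    rw [Polynomial.aeval_eq_sum_range]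
    refine sum_mem fun k _ => smul_mem _ _ ?_
    obtain ⟨a, ha⟩ := h k
    exact mem_span_singleton.mpr ⟨a, by rw [Algebra.smul_def, ha]; field_simp⟩
  have : IsNoetherian A (Subalgebra.toSubmodule (Algebra.adjoin A {t})) :=
    isNoetherian_of_le hle
  exact isIntegral_of_submodule_noetherian _ this t (Algebra.self_mem_adjoin_singleton A t)

theorem mem_range_of_isIntegral_of_mul_mem_range [IsDomain A] [IsIntegrallyClosed A]
    (hAK : Function.Injective (algebraMap A K)) {t : K} (ht : IsIntegral A t) {d : A} (hd : d ≠ 0)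
    (hdt : algebraMap A K d * t ∈ (algebraMap A K).range) : t ∈ (algebraMap A K).range := by
  obtain ⟨c, hc⟩ := hdt
  let φ : FractionRing A →ₐ[A] K := IsFractionRing.liftAlgHom (g := Algebra.ofId A K) hAK
  have hdK : algebraMap A K d ≠ 0 := (map_ne_zero_iff _ hAK).mpr hd
  have hφ : φ (algebraMap A _ c / algebraMap A _ d) = t := by
    rw [map_div₀, φ.commutes, φ.commutes, hc]
    field_simp
  rw [← hφ, isIntegral_algHom_iff φ φ.toRingHom.injective] at ht
  obtain ⟨a, ha⟩ := IsIntegrallyClosed.isIntegral_iff.mp ht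
  exact ⟨a, by rw [← hφ, ← ha, φ.commutes]⟩

theorem exists_smul_mem_span_basis_of_rank_eq [IsDomain A]
    (hAK : Function.Injective (algebraMap A K)) (hfg : M.FG)
    (hrank : Module.rank A M = Module.rank K W) {ι : Type*} [Fintype ι] (e : Module.Basis ι K W)
    (heM : ∀ i, e i ∈ M) :
    ∃ d : A, d ≠ 0 ∧ ∀ x ∈ M, d • x ∈ span A (Set.range e) := by
  have : FaithfulSMul A K := (faithfulSMul_iff_algebraMap_injective A K).mpr hAK
  have : Module.Finite A M := Module.Finite.iff_fg.mpr hfg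
  let P : Submodule A M := span A (Set.range fun i => ⟨e i, heM i⟩)
  have hli : LinearIndependent A (fun i => (⟨e i, heM i⟩ : M)) :=
    LinearIndependent.of_comp (M.subtype) (e.linearIndependent.restrict_scalars' A)
  have hfinrank : Module.finrank A (M ⧸ P) = 0 := by
    have h1 := P.finrank_quotient_add_finrank
    rw [finrank_span_eq_card hli, show Module.finrank A M = Module.finrank K W from
      congrArg Cardinal.toNat hrank, Module.finrank_eq_card_basis e] at h1
    omega
  have htors : Module.IsTorsion A (M ⧸ P) := fun {x} => by
    obtain ⟨a, ha0, hax⟩ := Module.finrank_eq_zero_iff.mp hfinrank x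
    exact ⟨⟨a, mem_nonZeroDivisors_of_ne_zero ha0⟩, hax⟩
  obtain ⟨d, hdann, hd⟩ := Submodule.annihilator_top_inter_nonZeroDivisors htors
  refine ⟨d, nonZeroDivisors.ne_zero hd, fun x hx => ?_⟩
  have hdx : d • (⟨x, hx⟩ : M) ∈ P := by
    rw [← Submodule.Quotient.mk_eq_zero, Submodule.Quotient.mk_smul]
    exact (Submodule.mem_annihilator.mp hdann) _ Submodule.mem_top
  have := Submodule.mem_map_of_mem (f := M.subtype) hdx
  rwa [Submodule.map_span, ← Set.range_comp] at this

theorem Module.Basis.det_mem_range_of_mapsTo [IsDedekindDomain A]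
    (hAK : Function.Injective (algebraMap A K)) {ι : Type*} [Fintype ι] [DecidableEq ι]
    (e : Module.Basis ι K W) (heM : ∀ i, e i ∈ M) {d : A} (hd : d ≠ 0)
    (hdM : ∀ x ∈ M, d • x ∈ span A (Set.range e)) {w : W →ₗ[K] W} (hw : Set.MapsTo w M M) : LinearMap.det w ∈ (algebraMap A K).range := by
  have := Module.isTorsionFree_iff_algebraMap_injective.mpr hAK
  have hpow (k : ℕ) : algebraMap A K d ^ Fintype.card ι * LinearMap.det w ^ k ∈
      (algebraMap A K).range := by
    rw [← map_pow LinearMap.det]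
    refine e.mul_det_mem_range_of_mapsTo heM hdM ?_
    rw [Module.End.coe_pow]
    exact hw.iterate k
  have hdK : algebraMap A K d ≠ 0 := (map_ne_zero_iff _ hAK).mpr hd
  refine mem_range_of_isIntegral_of_mul_mem_range hAK
    (isIntegral_of_forall_mul_pow_mem_range (pow_ne_zero _ hdK) hpow)
    (pow_ne_zero (Fintype.card ι) hd) ?_
  simpa using hpow 1

theorem exists_apply_eq_one_forall_smul_mem [IsDedekindDomain A]
    (hAK : Function.Injective (algebraMap A K)) (lam : W →ₗ[K] K) {d : A}
    (hd : d ≠ 0) (hdM : ∀ x ∈ M, algebraMap A K d * lam x ∈ (algebraMap A K).range) {x₀ : W}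
    (hx₀M : x₀ ∈ M) (hx₀ : lam x₀ = 1) :
    ∃ m₀ : W, lam m₀ = 1 ∧ ∀ x ∈ M, lam x • m₀ ∈ M := by
  have hdK : algebraMap A K d ≠ 0 := (map_ne_zero_iff _ hAK).mpr hd
  let I : Ideal A := (M.map (d • lam.restrictScalars A)).comap (Algebra.linearMap A K)
  have mem_I {x : W} (hx : x ∈ M) {b : A} (hb : algebraMap A K b = algebraMap A K d * lam x) :
      b ∈ I :=
    ⟨x, hx, by simp [hb, Algebra.smul_def]⟩
  obtain ⟨J, hIJ⟩ : I ∣ Ideal.span {d} :=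
    Ideal.dvd_iff_le.mpr ((Ideal.span_singleton_le_iff_mem I).mpr (mem_I hx₀M (by simp [hx₀])))
  have hdIJ : d ∈ I * J := hIJ ▸ Ideal.mem_span_singleton_self d
  -- Writing `d = ∑ bᵢ b'ᵢ` with `bᵢ = d λ(rᵢ) ∈ I`, `b'ᵢ ∈ J`, the vector `m₀ = ∑ b'ᵢ rᵢ` works,
  -- since `b'ᵢ λ(M) ⊆ d⁻¹ b'ᵢ I ⊆ d⁻¹ (d) = A`.
  suffices ∀ z ∈ I * J, ∃ m : W, algebraMap A K d * lam m = algebraMap A K z ∧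
      ∀ x ∈ M, lam x • m ∈ M by
    obtain ⟨m₀, hm₀, hM⟩ := this d hdIJ
    exact ⟨m₀, mul_left_cancel₀ hdK (by rw [hm₀, mul_one]), hM⟩
  intro z hz
  refine Submodule.mul_induction_on hz (fun b hb b' hb' => ?_) fun z₁ z₂ ih₁ ih₂ => ?_
  · obtain ⟨r, hr, hrb⟩ := hb
    replace hrb : algebraMap A K d * lam r = algebraMap A K b := by
      simpa [Algebra.smul_def] using hrb
    refine ⟨algebraMap A K b' • r, ?_, fun x hx => ?_⟩
    · rw [map_smul, smul_eq_mul, mul_left_comm, hrb, map_mul, mul_comm]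
    obtain ⟨b'', hb''⟩ := hdM x hx
    obtain ⟨a, ha⟩ := (Ideal.mem_span_singleton'.mp
      (hIJ ▸ Ideal.mul_mem_mul (mem_I hx hb'') hb' : b'' * b' ∈ Ideal.span {d}))
    have : lam x * algebraMap A K b' = algebraMap A K a := by
      refine mul_left_cancel₀ hdK ?_
      rw [← mul_assoc, ← hb'', ← map_mul, ← map_mul, ← ha, mul_comm]
    rw [smul_smul, this, algebraMap_smul]
    exact M.smul_mem a hr
  · obtain ⟨m₁, hm₁, hM₁⟩ := ih₁
    obtain ⟨m₂, hm₂, hM₂⟩ := ih₂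
    refine ⟨m₁ + m₂, by rw [map_add, mul_add, hm₁, hm₂, map_add], fun x hx => ?_⟩
    rw [smul_add]
    exact add_mem (hM₁ x hx) (hM₂ x hx)

theorem exists_mapsTo_det_eq_of_smul_mem [FiniteDimensional K W] (lam : W →ₗ[K] K) {m₀ : W}
    (hm₀ : lam m₀ = 1) (hM : ∀ x ∈ M, lam x • m₀ ∈ M) (a : A) :
    ∃ w : W →ₗ[K] W, Set.MapsTo w M M ∧ LinearMap.det w = algebraMap A K a := by
  refine ⟨LinearMap.transvection ((algebraMap A K a - 1) • lam) m₀, fun x hx => ?_, ?_⟩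
  · have : LinearMap.transvection ((algebraMap A K a - 1) • lam) m₀ x =
        x + a • (lam x • m₀) - lam x • m₀ := by
      rw [LinearMap.transvection.apply, LinearMap.smul_apply, smul_eq_mul, ← smul_smul,
        sub_smul, one_smul, algebraMap_smul, add_sub_assoc]
    rw [SetLike.mem_coe, this]
    exact sub_mem (add_mem hx (M.smul_mem a (hM x hx))) (hM x hx)
  · rw [LinearMap.transvection.det, LinearMap.smul_apply, hm₀, smul_eq_mul]
    ring

namespace IsLattice

theorem exists_basis_smul_mem_span [IsDomain A] (hM : IsLattice A K W M)
    (hsp : span K (M : Set W) = ⊤) (hAK : Function.Injective (algebraMap A K)) :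
    ∃ (s : Set W) (_ : Fintype s) (e : Module.Basis s K W) (d : A), d ≠ 0 ∧ (∀ i, e i ∈ M) ∧
      ∀ x ∈ M, d • x ∈ span A (Set.range e) := by
  have : Module.Finite A M := Module.Finite.iff_fg.mpr hM.1
  have hrank : Module.rank A M = Module.rank K W := by rw [hM.2, hsp, rank_top]
  have : FiniteDimensional K W :=
    Module.rank_lt_aleph0_iff.mp (hrank ▸ Module.rank_lt_aleph0 A M)
  obtain ⟨s, hsM, hspan, hli⟩ := exists_linearIndependent K (M : Set W)
  have := hli.setFinite.fintype
  let e := Module.Basis.mk hli (by rw [Subtype.range_coe, hspan, hsp])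
  have heM (i : s) : e i ∈ M := by simpa [e] using hsM i.2
  obtain ⟨d, hd, hdM⟩ := exists_smul_mem_span_basis_of_rank_eq hAK hM.1 hrank e heM
  exact ⟨s, inferInstance, e, d, hd, heM, hdM⟩

theorem det_mem_range_of_mapsTo [IsDedekindDomain A] (hM : IsLattice A K W M)
    (hsp : span K (M : Set W) = ⊤) (hAK : Function.Injective (algebraMap A K))
    {w : W →ₗ[K] W} (hw : Set.MapsTo w M M) : LinearMap.det w ∈ (algebraMap A K).range := by
  classical
  obtain ⟨s, _, e, d, hd, heM, hdM⟩ := hM.exists_basis_smul_mem_span hsp hAK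
  exact e.det_mem_range_of_mapsTo hAK heM hd hdM hw

theorem exists_mapsTo_det_eq [IsDedekindDomain A] (hM : IsLattice A K W M)
    (hsp : span K (M : Set W) = ⊤) (hAK : Function.Injective (algebraMap A K))
    (hM0 : M ≠ ⊥) (a : A) :
    ∃ w : W →ₗ[K] W, Set.MapsTo w M M ∧ LinearMap.det w = algebraMap A K a := by
  have := Module.isTorsionFree_iff_algebraMap_injective.mpr hAK
  obtain ⟨s, _, e, d, hd, heM, hdM⟩ := hM.exists_basis_smul_mem_span hsp hAK
  have := Module.Finite.of_basis e
  obtain ⟨x, -, hx⟩ := (Submodule.ne_bot_iff M).mp hM0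
  have : Nontrivial W := nontrivial_of_ne x 0 hx
  obtain ⟨i₀⟩ := e.index_nonempty
  have hdM' (x : W) (hx : x ∈ M) :
      algebraMap A K d * e.coord i₀ x ∈ (algebraMap A K).range := by
    have := (e.mem_span_iff_repr_mem A _).mp (hdM x hx) i₀
    rwa [← algebraMap_smul K d x, map_smul, Finsupp.smul_apply, smul_eq_mul] at this
  obtain ⟨m₀, hm₀, hM⟩ :=
    exists_apply_eq_one_forall_smul_mem hAK (e.coord i₀) hd hdM' (heM i₀) (by simp)
  exact exists_mapsTo_det_eq_of_smul_mem (e.coord i₀) hm₀ hM a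

theorem setOf_det_mapsTo_eq_span [IsDedekindDomain A] (hM : IsLattice A K W M)
    (hsp : span K (M : Set W) = ⊤) (hAK : Function.Injective (algebraMap A K))
    (hM0 : M ≠ ⊥) {N : Submodule A W} (v : W ≃ₗ[K] W)
    (hv : M.map (v.toLinearMap.restrictScalars A) = N) :
    {z : K | ∃ u : W →ₗ[K] W, LinearMap.det u = z ∧ Set.MapsTo u M N} =
      span A {LinearMap.det v.toLinearMap} := by
  ext z
  constructor
  · rintro ⟨u, rfl, hu⟩
    have hw : Set.MapsTo (v.symm.toLinearMap ∘ₗ u) M M := fun x hx => by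
      obtain ⟨y, hy, hyx⟩ := hv.symm ▸ hu hx
      simpa [← hyx] using hy
    obtain ⟨a, ha⟩ := hM.det_mem_range_of_mapsTo hsp hAK hw
    refine mem_span_singleton.mpr ⟨a, ?_⟩
    rw [Algebra.smul_def, ha, mul_comm, ← LinearMap.det_comp, ← LinearMap.comp_assoc]
    simp
  · intro hz
    obtain ⟨a, rfl⟩ := mem_span_singleton.mp hz
    obtain ⟨w, hw, hdet⟩ := hM.exists_mapsTo_det_eq hsp hAK hM0 a
    refine ⟨v.toLinearMap ∘ₗ w, ?_, fun x hx => hv ▸ mem_map_of_mem (hw hx)⟩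
    rw [LinearMap.det_comp, hdet, Algebra.smul_def, mul_comm]

end IsLattice

end

section Restrict

variable {A K V} {R : Submodule A V} {P : Submodule K V}

theorem map_comap_restrictScalars_subtype (hRP : (R : Set V) ⊆ P) :
    (R.comap (P.subtype.restrictScalars A)).map (P.subtype.restrictScalars A) = R := by
  rw [map_comap_eq, inf_eq_right]
  exact fun x hx => ⟨⟨x, hRP hx⟩, rfl⟩

theorem span_comap_restrictScalars_subtype_eq_top (hRP : span K (R : Set V) = P) :
    span K (R.comap (P.subtype.restrictScalars A) : Set P) = ⊤ := by
  apply map_injective_of_injective P.injective_subtype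
  have hRP' : (R : Set V) ⊆ P := hRP ▸ subset_span
  have himage := congrArg SetLike.coe (map_comap_restrictScalars_subtype hRP')
  rw [map_coe] at himage
  rw [map_span, map_subtype_top]
  exact (congrArg (span K) himage).trans hRP

theorem IsLattice.comap_restrictScalars_subtype (hR : IsLattice A K V R)
    (hRP : span K (R : Set V) = P) :
    IsLattice A K P (R.comap (P.subtype.restrictScalars A)) := by
  have hinj : Function.Injective (P.subtype.restrictScalars A) := Subtype.val_injective
  have hRP' : (R : Set V) ⊆ P := hRP ▸ subset_span
  have hmap := map_comap_restrictScalars_subtype hRP'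
  refine ⟨fg_of_fg_map_injective _ hinj (by rw [hmap]; exact hR.1), ?_⟩
  rw [span_comap_restrictScalars_subtype_eq_top hRP, rank_top,
    ((equivMapOfInjective _ hinj _).trans (LinearEquiv.ofEq _ _ hmap)).rank_eq, hR.2, hRP]

end Restrict

theorem stmt_5 [IsDedekindDomain A] (hAK : Function.Injective (algebraMap A K))
    (R S : Submodule A V) (hR : IsLattice A K V R)
    (hR0 : R ≠ ⊥) (hspan : span K (R : Set V) = span K (S : Set V))
    (v : (span K ((R : Set V) ∪ (S : Set V))) ≃ₗ[K]
        (span K ((R : Set V) ∪ (S : Set V))))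
    (hv : Submodule.map (v.toLinearMap.restrictScalars A)
        (Submodule.comap (((span K ((R : Set V) ∪ (S : Set V))).subtype).restrictScalars A) R)
      = Submodule.comap (((span K ((R : Set V) ∪ (S : Set V))).subtype).restrictScalars A) S) :
    indexSet A K V R S = ↑(span A {LinearMap.det v.toLinearMap}) := by
  have hspanR : span K (R : Set V) = span K ((R : Set V) ∪ (S : Set V)) := by
    rw [span_union, hspan, sup_idem]
  have hRsub : (R : Set V) ⊆ span K ((R : Set V) ∪ (S : Set V)) := hspanR ▸ subset_span
  have hM0 : R.comap ((span K ((R : Set V) ∪ (S : Set V))).subtype.restrictScalars A) ≠ ⊥ :=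
    fun h => hR0 (by rw [← map_comap_restrictScalars_subtype hRsub, h, Submodule.map_bot])
  exact (hR.comap_restrictScalars_subtype hspanR).setOf_det_mapsTo_eq_span
    (span_comap_restrictScalars_subtype_eq_top hspanR) hAK hM0 v hv
end

section
/- Let S be a multiplicative subset of ℤ not containing 0, A = S^{-1}ℤ, and let N ⊆ M be A-lattices of a ℚ-vector space V (or K-vector space with A ⊆ K) with M ≠ 0 and rank_A(M) = rank_A(N). Then [M:N]'_A = [M:N]·A, where [M:N] is the cardinality of M/N. -/
/-!
Smith normal form gives an `A`-basis `(bᵢ)` of `M` such that `N` is spanned by the `aᵢ bᵢ`.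
In the `K`-basis `(bᵢ)` of `K M`, the endomorphisms `u` with `u(M) ⊆ N` are exactly those whose
matrix is `diag(a) * C` with `C` integral; as `det C` takes every value in `A`, their determinants
form `(∏ aᵢ) A`. On the other side `M/N ≅ ⊕ A/aᵢ`, and in a localization of `ℤ` each `dA` is
generated by `#(A/dA)`: if `dA ∩ ℤ = nℤ`, then `ℤ/n → A/dA` is bijective, since the elements of
`S`, being non-zero-divisors modulo `n`, are units of the finite ring `ℤ/n`.
-/

open Submodule

variable (A K V : Type*) [CommRing A] [Field K] [Algebra A K]
  [AddCommGroup V] [Module K V] [Module A V] [IsScalarTower A K V]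

open Module

section Localization

variable {R : Type*} [CommRing R] (M : Submonoid R) {L : Type*} [CommRing L] [Algebra R L]
  [IsLocalization M L]

include M in
theorem IsLocalization.quotientMap_comap_bijective (J : Ideal L)
    [Finite (R ⧸ J.comap (algebraMap R L))] :
    Function.Bijective (Ideal.quotientMap J (algebraMap R L) le_rfl) := by
  set π := Ideal.Quotient.mk (J.comap (algebraMap R L))
  refine ⟨Ideal.quotientMap_injective, fun y ↦ ?_⟩
  obtain ⟨x, rfl⟩ := Ideal.Quotient.mk_surjective y
  obtain ⟨r, m, rfl⟩ := IsLocalization.exists_mk'_eq M x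
  -- `m` is a non-zero-divisor of the finite ring `R ⧸ J.comap`, hence a unit there
  obtain ⟨v, hv⟩ : IsUnit (π m) := by
    refine isUnit_iff_mem_nonZeroDivisors_of_finite.mpr
      (mem_nonZeroDivisors_iff_left.mpr fun t ht ↦ ?_)
    obtain ⟨t, rfl⟩ := Ideal.Quotient.mk_surjective t
    rw [← map_mul, Ideal.Quotient.eq_zero_iff_mem, Ideal.mem_comap, map_mul] at ht
    rw [Ideal.Quotient.eq_zero_iff_mem, Ideal.mem_comap]
    exact (J.unit_mul_mem_iff_mem (IsLocalization.map_units L m)).mp ht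
  obtain ⟨w, hw⟩ := Ideal.Quotient.mk_surjective (↑v⁻¹ : R ⧸ J.comap (algebraMap R L))
  have hmw : algebraMap R L (m * w - 1) ∈ J := by
    rw [← Ideal.mem_comap, ← Ideal.Quotient.eq_zero_iff_mem, map_sub, map_mul, hw, ← hv,
      Units.mul_inv, map_one, sub_self]
  refine ⟨π (r * w), ?_⟩
  rw [Ideal.quotientMap_mk, Ideal.Quotient.eq]
  convert J.mul_mem_left (IsLocalization.mk' L r m) hmw using 1
  rw [map_sub, map_mul, map_mul, map_one, mul_sub, mul_one, ← mul_assoc, IsLocalization.mk'_spec]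

include M in
theorem IsLocalization.eq_span_of_comap_eq_span {J : Ideal L} {x : R}
    (hx : J.comap (algebraMap R L) = Ideal.span {x}) : J = Ideal.span {algebraMap R L x} := by
  rw [← IsLocalization.map_under M L J, Ideal.under_def, hx, Ideal.map_span, Set.image_singleton]

include M in
theorem IsLocalization.isPrincipalIdealRing [IsPrincipalIdealRing R] : IsPrincipalIdealRing L where
  principal J := by
    obtain ⟨x, hx⟩ := (IsPrincipalIdealRing.principal (J.comap (algebraMap R L))).principal
    exact ⟨_, IsLocalization.eq_span_of_comap_eq_span M hx⟩

end Localization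

theorem IsLocalization.span_singleton_eq_span_natCard_quotient (S : Submonoid ℤ) {L : Type*}
    [CommRing L] [Algebra ℤ L] [IsLocalization S L] {d : L} (hd : d ≠ 0) :
    Ideal.span {d} = Ideal.span {(Nat.card (L ⧸ Ideal.span {d}) : L)} := by
  obtain ⟨m, hm⟩ :=
    (IsPrincipalIdealRing.principal ((Ideal.span {d}).comap (algebraMap ℤ L))).principal
  set n := m.natAbs
  have hI : (Ideal.span {d}).comap (algebraMap ℤ L) = Ideal.span {(n : ℤ)} := by
    rw [Int.span_natAbs]; exact hm
  have hdn : Ideal.span {d} = Ideal.span {(n : L)} := by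
    rw [IsLocalization.eq_span_of_comap_eq_span S hI, map_natCast]
  have : NeZero n := ⟨fun h ↦ hd (by simpa [h] using hdn)⟩
  have eZ : ℤ ⧸ (Ideal.span {d}).comap (algebraMap ℤ L) ≃ ZMod n :=
    ((Ideal.quotEquivOfEq hI).trans (Int.quotientSpanNatEquivZMod n)).toEquiv
  have : Finite (ℤ ⧸ (Ideal.span {d}).comap (algebraMap ℤ L)) := .of_equiv _ eZ.symm
  rw [← Nat.card_eq_of_bijective _ (IsLocalization.quotientMap_comap_bijective S _),
    Nat.card_congr eZ, Nat.card_zmod, hdn]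

theorem Matrix.det_surjective {n R : Type*} [Fintype n] [DecidableEq n] [Nonempty n]
    [CommRing R] : Function.Surjective (Matrix.det : Matrix n n R → R) := fun t ↦ by
  obtain ⟨i⟩ := ‹Nonempty n›
  exact ⟨diagonal (Function.update 1 i t), by simp [Finset.prod_update_of_mem]⟩

section IndexSet

variable {A K V} {ι : Type*} [Fintype ι] {W : Submodule K V}

theorem Module.Basis.coe_mem_span_smul_iff (b : Basis ι K W) (a : ι → A) (x : W) :
    (x : V) ∈ span A (Set.range fun i ↦ a i • (b i : V)) ↔
      ∃ c : ι → A, ∀ i, b.repr x i = algebraMap A K (c i * a i) := by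
  rw [mem_span_range_iff_exists_fun]
  refine exists_congr fun c ↦ ?_
  have : ∑ i, c i • a i • (b i : V) = ((∑ i, algebraMap A K (c i * a i) • b i : W) : V) := by
    simp only [Submodule.coe_sum, algebraMap_smul, mul_smul, Submodule.coe_smul_of_tower]
  rw [this, eq_comm, SetLike.coe_eq_coe, b.ext_elem_iff]
  simp only [b.repr_sum_self]

theorem Module.Basis.forall_mem_span_imp_iff (b : Basis ι K W) (u : W →ₗ[K] W)
    (N : Submodule A V) :
    (∀ x : W, (x : V) ∈ span A (Set.range fun i ↦ (b i : V)) → (u x : V) ∈ N) ↔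
      ∀ j, (u (b j) : V) ∈ N := by
  refine ⟨fun h j ↦ h _ (subset_span ⟨j, rfl⟩), fun h x hx ↦ ?_⟩
  obtain ⟨c, hc⟩ := (mem_span_range_iff_exists_fun A).mp hx
  have hx : x = ∑ i, c i • b i := Subtype.ext (by simp [← hc])
  rw [hx, map_sum]
  simpa using sum_mem fun i _ ↦ N.smul_mem (c i) (h i)

variable [DecidableEq ι]

theorem Module.Basis.forall_mem_span_imp_iff_exists_toMatrix_eq (b : Basis ι K W) (a : ι → A)
    (u : W →ₗ[K] W) :
    (∀ x : W, (x : V) ∈ span A (Set.range fun i ↦ (b i : V)) →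
        (u x : V) ∈ span A (Set.range fun i ↦ a i • (b i : V))) ↔
      ∃ C : Matrix ι ι A,
        LinearMap.toMatrix b b u = (Matrix.diagonal a * C).map (algebraMap A K) := by
  simp_rw [b.forall_mem_span_imp_iff, b.coe_mem_span_smul_iff, ← LinearMap.toMatrix_apply]
  constructor
  · intro h
    choose c hc using h
    exact ⟨.of fun i j ↦ c j i, by ext i j; simp [hc, Matrix.diagonal_mul, mul_comm]⟩
  · rintro ⟨C, hC⟩ j
    exact ⟨fun i ↦ C i j, fun i ↦ by simp [hC, Matrix.diagonal_mul, mul_comm]⟩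

theorem indexSet_eq_span_prod [Nonempty ι] {M N : Submodule A V}
    (b : Basis ι K (span K (M ∪ N : Set V))) (a : ι → A)
    (hM : span A (Set.range fun i ↦ (b i : V)) = M)
    (hN : span A (Set.range fun i ↦ a i • (b i : V)) = N) :
    indexSet A K V M N = span A {algebraMap A K (∏ i, a i)} := by
  have key u := hM ▸ hN ▸ b.forall_mem_span_imp_iff_exists_toMatrix_eq a u
  have hdet (C : Matrix ι ι A) :
      ((Matrix.diagonal a * C).map (algebraMap A K)).det = C.det • algebraMap A K (∏ i, a i) := by
    rw [← RingHom.mapMatrix_apply, ← RingHom.map_det, Matrix.det_mul, Matrix.det_diagonal,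
      map_mul, Algebra.smul_def, mul_comm]
  ext d
  simp only [indexSet, Set.mem_ofPred_eq, key, SetLike.mem_coe, mem_span_singleton]
  constructor
  · rintro ⟨u, rfl, C, hC⟩
    exact ⟨C.det, by rw [← LinearMap.det_toMatrix b, hC, hdet]⟩
  · rintro ⟨t, rfl⟩
    obtain ⟨C, rfl⟩ := Matrix.det_surjective (n := ι) t
    exact ⟨Matrix.toLin b b ((Matrix.diagonal a * C).map (algebraMap A K)),
      by rw [LinearMap.det_toLin, hdet], C, LinearMap.toMatrix_toLin b b _⟩

end IndexSet

theorem Module.Basis.span_range_apply_eq_range {ι R M M' : Type*} [CommRing R] [AddCommGroup M]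
    [Module R M] [AddCommGroup M'] [Module R M'] (b : Basis ι R M) (f : M →ₗ[R] M') :
    span R (Set.range fun i ↦ f (b i)) = LinearMap.range f := by
  rw [LinearMap.range_eq_map, ← b.span_eq, map_span, ← Set.range_comp]
  rfl

section Lattice

variable {A K V} {ι : Type*} [Fintype ι]

theorem Module.Basis.linearIndependent_of_rank_eq [Nontrivial A] {M : Submodule A V}
    (B : Basis ι A M) (h : Module.rank A M = Module.rank K (span K (M : Set V))) :
    LinearIndependent K fun i ↦ (B i : V) := by
  have hM : span A (Set.range fun i ↦ (B i : V)) = M := by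
    simpa using B.span_range_apply_eq_range M.subtype
  rw [linearIndependent_iff_card_eq_finrank_span, Set.finrank, ← span_span_of_tower A, hM,
    ← finrank_eq_card_basis B, finrank, h, finrank]

variable [IsDomain A] [IsPrincipalIdealRing A]

theorem span_natCard_quotient_eq_span_prod_smithNormalFormCoeffs
    (hcard : ∀ d : A, d ≠ 0 → Ideal.span {d} = Ideal.span {(Nat.card (A ⧸ Ideal.span {d}) : A)})
    {M : Type*} [AddCommGroup M] [Module A M] (b : Basis ι A M) {N : Submodule A M}
    (h : finrank A N = finrank A M) :
    Ideal.span {(Nat.card (M ⧸ N) : A)} = Ideal.span {∏ i, smithNormalFormCoeffs b h i} := by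
  rw [Nat.card_congr (N.quotientEquivPiSpan b h).toEquiv, Nat.card_pi, Nat.cast_prod,
    ← Ideal.prod_span_singleton, ← Ideal.prod_span_singleton]
  exact Finset.prod_congr rfl fun i _ ↦ (hcard _ (smithNormalFormCoeffs_ne_zero b h i)).symm

theorem indexSet_eq_span_natCard_quotient [Module.IsTorsionFree A V]
    (hcard : ∀ d : A, d ≠ 0 → Ideal.span {d} = Ideal.span {(Nat.card (A ⧸ Ideal.span {d}) : A)})
    {M N : Submodule A V} (hM : IsLattice A K V M) (hM0 : M ≠ ⊥) (hNM : N ≤ M)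
    (hrk : Module.rank A M = Module.rank A N) :
    indexSet A K V M N = span A {(Nat.card (M ⧸ N.comap M.subtype) : K)} := by
  have : Module.Finite A M := Module.Finite.iff_fg.mpr hM.1
  have hfr : finrank A (N.comap M.subtype) = finrank A M := by
    rw [finrank, (comapSubtypeEquivOfLe hNM).rank_eq, ← hrk, finrank]
  set b₀ := Free.chooseBasis A M
  set B := smithNormalFormTopBasis b₀ hfr
  set a := smithNormalFormCoeffs b₀ hfr
  have : Nontrivial M := nontrivial_iff_ne_bot.mpr hM0
  have := B.index_nonempty
  have hMB : span A (Set.range fun i ↦ (B i : V)) = M := by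
    simpa using B.span_range_apply_eq_range M.subtype
  have hNB : span A (Set.range fun i ↦ a i • (B i : V)) = N := by
    simpa [LinearMap.range_comp, hNM] using
      (smithNormalFormBotBasis b₀ hfr).span_range_apply_eq_range
        (M.subtype ∘ₗ (N.comap M.subtype).subtype)
  have hspan : span K (Set.range fun i ↦ (B i : V)) = span K (M ∪ N : Set V) := by
    rw [Set.union_eq_self_of_subset_right hNM, ← span_span_of_tower A, hMB]
  let b : Basis _ K (span K (M ∪ N : Set V)) :=
    (Basis.span (B.linearIndependent_of_rank_eq hM.2)).map (LinearEquiv.ofEq _ _ hspan)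
  have hb i : (b i : V) = B i := by simp [b]
  rw [indexSet_eq_span_prod b a (by simpa [hb]) (by simpa [hb])]
  have h := congrArg (Submodule.map (Algebra.linearMap A K))
    (span_natCard_quotient_eq_span_prod_smithNormalFormCoeffs hcard b₀ hfr)
  simp only [← Ideal.submodule_span_eq, map_span, Set.image_singleton, Algebra.linearMap_apply,
    map_natCast] at h
  rw [h]

end Lattice

theorem stmt_14_general (S : Submonoid ℤ)
    {K V : Type*} [Field K] [Algebra (Localization S) K]
    [AddCommGroup V] [Module K V] [Module (Localization S) V]
    [IsScalarTower (Localization S) K V]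
    (hAK : Function.Injective (algebraMap (Localization S) K))
    (M N : Submodule (Localization S) V)
    (hM : IsLattice (Localization S) K V M)
    (hM0 : M ≠ ⊥) (hNM : N ≤ M)
    (hrk : Module.rank (Localization S) M = Module.rank (Localization S) N) :
    indexSet (Localization S) K V M N =
      ↑(span (Localization S) {((Nat.card (M ⧸ (N.comap M.subtype))) : K)}) := by
  have : FaithfulSMul (Localization S) K := (faithfulSMul_iff_algebraMap_injective _ _).mpr hAK
  have : IsDomain (Localization S) := .of_faithfulSMul _ K
  have : IsPrincipalIdealRing (Localization S) := IsLocalization.isPrincipalIdealRing S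
  have : Module.IsTorsionFree (Localization S) V := .trans_faithfulSMul _ K V
  exact indexSet_eq_span_natCard_quotient
    (fun _ hd ↦ IsLocalization.span_singleton_eq_span_natCard_quotient S hd) hM hM0 hNM hrk

/-- For A = S⁻¹ℤ a localization of ℤ away from 0, and N ⊆ M lattices of equal rank,
[M:N]'_A is the principal ideal of A generated by the group index [M:N] = #(M/N). -/
theorem stmt_14 (S : Submonoid ℤ) (h0 : (0 : ℤ) ∉ S)
    {K V : Type*} [Field K] [Algebra (Localization S) K]
    [AddCommGroup V] [Module K V] [Module (Localization S) V]
    [IsScalarTower (Localization S) K V]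
    (hAK : Function.Injective (algebraMap (Localization S) K))
    (M N : Submodule (Localization S) V)
    (hM : IsLattice (Localization S) K V M) (hN : IsLattice (Localization S) K V N)
    (hM0 : M ≠ ⊥) (hNM : N ≤ M)
    (hrk : Module.rank (Localization S) M = Module.rank (Localization S) N) :
    indexSet (Localization S) K V M N =
      ↑(span (Localization S) {((Nat.card (M ⧸ (N.comap M.subtype))) : K)}) :=
  stmt_14_general S hAK M N hM hM0 hNM hrk
end
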